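/- arXiv:1909.06578 — 2 statements merged into one kernel-verified Lean document; each statement's English description precedes it below -/
import Mathlib

section
/- Let G₁ be a broken sun graph with no perfect matching and G₂ a unicyclic graph with a perfect matching. If 2 is a Laplacian eigenvalue of both G₁ and G₂, then 2 is a Laplacian eigenvalue of any one-edge connection G₁ ⊙ G₂. -/
open scoped Classical

/-- The one-edge connection `G₁ ⊙ G₂`. -/
def oneEdgeConn {V₁ V₂ : Type*} (G₁ : SimpleGraph V₁) (G₂ : SimpleGraph V₂)
    (u : V₁) (v : V₂) : SimpleGraph (V₁ ⊕ V₂) :=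
  SimpleGraph.fromRel (fun x y =>
    match x, y with
    | Sum.inl a, Sum.inl b => G₁.Adj a b
    | Sum.inr a, Sum.inr b => G₂.Adj a b
    | Sum.inl a, Sum.inr b => a = u ∧ b = v
    | Sum.inr _, Sum.inl _ => False)

/-- A broken sun graph: a cycle (of length `g ≥ 3`) with pendant vertices attached to some
of its vertices, at most one pendant per cycle vertex. -/
def SimpleGraph.IsBrokenSun {V : Type*} (G : SimpleGraph V) : Prop :=
  ∃ (g : ℕ) (hg : 3 ≤ g) (c : Fin g → V), Function.Injective c ∧
    (∀ i j : Fin g, G.Adj (c i) (c j) ↔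
      (j = i + (⟨1, by omega⟩ : Fin g) ∨ i = j + (⟨1, by omega⟩ : Fin g))) ∧
    (∀ v : V, v ∉ Set.range c → ∃! w : V, G.Adj v w) ∧
    (∀ v : V, v ∉ Set.range c → ∀ w : V, G.Adj v w → w ∈ Set.range c) ∧
    (∀ i : Fin g, ∀ v w : V, v ∉ Set.range c → w ∉ Set.range c →
      G.Adj v (c i) → G.Adj w (c i) → v = w)

namespace SimpleGraph

theorem lapMatrix_mulVec_apply_eq_sum {V R : Type*} [Fintype V] [DecidableEq V] [NonAssocRing R]
    (G : SimpleGraph V) [DecidableRel G.Adj] (x : V → R) (a : V) :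
    (G.lapMatrix R).mulVec x a = ∑ b, if G.Adj a b then x a - x b else 0 := by
  rw [lapMatrix_mulVec_apply, ← Finset.sum_filter, ← neighborFinset_eq_filter,
    Finset.sum_sub_distrib, Finset.sum_const, card_neighborFinset_eq_degree, nsmul_eq_mul]

end SimpleGraph

section oneEdgeConn

variable {V₁ V₂ : Type*} (G₁ : SimpleGraph V₁) (G₂ : SimpleGraph V₂) (u : V₁) (v : V₂)

@[simp]
theorem oneEdgeConn_adj_inl_inl (a b : V₁) :
    (oneEdgeConn G₁ G₂ u v).Adj (.inl a) (.inl b) ↔ G₁.Adj a b := by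
  simp only [oneEdgeConn, SimpleGraph.fromRel_adj, ne_eq, Sum.inl.injEq, G₁.adj_comm b a, or_self,
    and_iff_right_iff_imp]
  exact G₁.ne_of_adj

@[simp]
theorem oneEdgeConn_adj_inr_inr (a b : V₂) :
    (oneEdgeConn G₁ G₂ u v).Adj (.inr a) (.inr b) ↔ G₂.Adj a b := by
  simp only [oneEdgeConn, SimpleGraph.fromRel_adj, ne_eq, Sum.inr.injEq, G₂.adj_comm b a, or_self,
    and_iff_right_iff_imp]
  exact G₂.ne_of_adj

@[simp]
theorem oneEdgeConn_adj_inl_inr (a : V₁) (b : V₂) :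
    (oneEdgeConn G₁ G₂ u v).Adj (.inl a) (.inr b) ↔ a = u ∧ b = v := by
  simp [oneEdgeConn]

@[simp]
theorem oneEdgeConn_adj_inr_inl (a : V₂) (b : V₁) :
    (oneEdgeConn G₁ G₂ u v).Adj (.inr a) (.inl b) ↔ b = u ∧ a = v := by
  rw [SimpleGraph.adj_comm, oneEdgeConn_adj_inl_inr]

variable {G₁ G₂ u v} [Fintype V₁] [Fintype V₂] [DecidableEq V₁] [DecidableEq V₂]
  [DecidableRel G₁.Adj] [DecidableRel G₂.Adj] [DecidableRel (oneEdgeConn G₁ G₂ u v).Adj]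
  {R : Type*}

/-- The bridge `uv` contributes `x u - y v` to the Laplacian at its endpoints, so it is invisible
to vectors that agree there. -/
theorem oneEdgeConn_lapMatrix_mulVec_sumElim [NonAssocRing R] {x : V₁ → R} {y : V₂ → R}
    (hxy : x u = y v) :
    ((oneEdgeConn G₁ G₂ u v).lapMatrix R).mulVec (Sum.elim x y) =
      Sum.elim ((G₁.lapMatrix R).mulVec x) ((G₂.lapMatrix R).mulVec y) := by
  funext w
  rw [SimpleGraph.lapMatrix_mulVec_apply_eq_sum, Fintype.sum_sum_type]
  cases w with
  | inl a =>
    have bridge : (∑ b : V₂, if a = u ∧ b = v then x a - y b else 0) = 0 := by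
      rcases eq_or_ne a u with rfl | ha
      · simp [hxy]
      · simp [ha]
    simp [bridge, SimpleGraph.lapMatrix_mulVec_apply_eq_sum]
  | inr a =>
    have bridge : (∑ b : V₁, if b = u ∧ a = v then y a - x b else 0) = 0 := by
      rcases eq_or_ne a v with rfl | ha
      · simp [hxy]
      · simp [ha]
    simp [bridge, SimpleGraph.lapMatrix_mulVec_apply_eq_sum]

theorem oneEdgeConn_lapMatrix_mulVec_sumElim_eq_smul [NonAssocRing R] {μ : R}
    {x : V₁ → R} {y : V₂ → R}
    (hx : (G₁.lapMatrix R).mulVec x = μ • x) (hy : (G₂.lapMatrix R).mulVec y = μ • y)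
    (hxy : x u = y v) :
    ((oneEdgeConn G₁ G₂ u v).lapMatrix R).mulVec (Sum.elim x y) = μ • Sum.elim x y := by
  rw [oneEdgeConn_lapMatrix_mulVec_sumElim hxy, hx, hy]
  funext w
  cases w <;> rfl

theorem exists_oneEdgeConn_lapMatrix_mulVec_eq_smul [CommRing R] [NoZeroDivisors R]
    {μ : R} {x : V₁ → R} {y : V₂ → R} (hx₀ : x ≠ 0) (hy₀ : y ≠ 0)
    (hx : (G₁.lapMatrix R).mulVec x = μ • x) (hy : (G₂.lapMatrix R).mulVec y = μ • y) :
    ∃ z : V₁ ⊕ V₂ → R, z ≠ 0 ∧ ((oneEdgeConn G₁ G₂ u v).lapMatrix R).mulVec z = μ • z := by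
  by_cases hxu : x u = 0
  · refine ⟨Sum.elim x 0, fun h ↦ hx₀ ?_, ?_⟩
    · funext a
      simpa using congrFun h (.inl a)
    · exact oneEdgeConn_lapMatrix_mulVec_sumElim_eq_smul hx (by simp) hxu
  · refine ⟨Sum.elim (y v • x) (x u • y), fun h ↦ smul_ne_zero hxu hy₀ ?_, ?_⟩
    · funext b
      simpa using congrFun h (.inr b)
    · refine oneEdgeConn_lapMatrix_mulVec_sumElim_eq_smul ?_ ?_ (mul_comm _ _)
      · rw [Matrix.mulVec_smul, hx, smul_comm]
      · rw [Matrix.mulVec_smul, hy, smul_comm]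

end oneEdgeConn

theorem brokenSun_unicyclic_oneEdgeConn_eigenvalue_two_general
    {V₁ V₂ : Type*} [Fintype V₁] [Fintype V₂] [DecidableEq V₁] [DecidableEq V₂]
    (G₁ : SimpleGraph V₁) (G₂ : SimpleGraph V₂)
    (h2₁ : ∃ X : V₁ → ℝ, X ≠ 0 ∧ (G₁.lapMatrix ℝ).mulVec X = (2 : ℝ) • X)
    (h2₂ : ∃ X : V₂ → ℝ, X ≠ 0 ∧ (G₂.lapMatrix ℝ).mulVec X = (2 : ℝ) • X)
    (u : V₁) (v : V₂) :
    ∃ X : (V₁ ⊕ V₂) → ℝ, X ≠ 0 ∧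
      ((oneEdgeConn G₁ G₂ u v).lapMatrix ℝ).mulVec X = (2 : ℝ) • X := by
  obtain ⟨x, hx₀, hx⟩ := h2₁
  obtain ⟨y, hy₀, hy⟩ := h2₂
  exact exists_oneEdgeConn_lapMatrix_mulVec_eq_smul hx₀ hy₀ hx hy

/-- Let `G₁` be a broken sun graph with no perfect matching and `G₂` a
unicyclic graph with a perfect matching. If `2` is a Laplacian eigenvalue of both `G₁` and
`G₂`, then `2` is a Laplacian eigenvalue of any one-edge connection `G₁ ⊙ G₂`. -/
theorem brokenSun_unicyclic_oneEdgeConn_eigenvalue_two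
    {V₁ V₂ : Type*} [Fintype V₁] [Fintype V₂] [DecidableEq V₁] [DecidableEq V₂]
    (G₁ : SimpleGraph V₁) (G₂ : SimpleGraph V₂)
    (hbs : G₁.IsBrokenSun)
    (hnm₁ : ¬ ∃ M : G₁.Subgraph, M.IsPerfectMatching)
    (hc₂ : G₂.Connected) (huni₂ : G₂.edgeFinset.card = Fintype.card V₂)
    (M₂ : G₂.Subgraph) (hM₂ : M₂.IsPerfectMatching)
    (h2₁ : ∃ X : V₁ → ℝ, X ≠ 0 ∧ (G₁.lapMatrix ℝ).mulVec X = (2 : ℝ) • X)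
    (h2₂ : ∃ X : V₂ → ℝ, X ≠ 0 ∧ (G₂.lapMatrix ℝ).mulVec X = (2 : ℝ) • X)
    (u : V₁) (v : V₂) :
    ∃ X : (V₁ ⊕ V₂) → ℝ, X ≠ 0 ∧
      ((oneEdgeConn G₁ G₂ u v).lapMatrix ℝ).mulVec X = (2 : ℝ) • X :=
  brokenSun_unicyclic_oneEdgeConn_eigenvalue_two_general G₁ G₂ h2₁ h2₂ u v
end

section
/- If a tree T of order n has 2 as a Laplacian eigenvalue, then n is even. -/
open scoped Classical

open Finset Matrix

/-! An eigenvector of the integer matrix `L(T)` for the integer eigenvalue `2` can be chosen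
integral with coprime entries. For an edge `uv` of the tree let `S` be the side of `u` in
`T - uv`; as `uv` is the only edge leaving `S`, `L 1_S = e_u - e_v`, so summing `L x = 2 x`
over `S` gives `x u - x v = 2 ∑_{w ∈ S} x w`. Hence all entries of `x` have the same parity,
and they are odd because they are coprime. Since `1ᵀ L = 0`, also `2 ∑ x = 0`, and a vanishing
sum of `n` odd numbers forces `n` to be even. -/

section IntegerEigenvectors

variable {n : Type*} [Fintype n] [DecidableEq n]

theorem Matrix.exists_mulVec_eq_zero_gcd_eq_one {α : Type*} [CommRing α] [IsDomain α]
    [NormalizedGCDMonoid α] {M : Matrix n n α} (h : M.det = 0) :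
    ∃ z : n → α, univ.gcd z = 1 ∧ M *ᵥ z = 0 := by
  obtain ⟨z, hz0, hz⟩ := exists_mulVec_eq_zero_iff.mpr h
  obtain ⟨i, hi⟩ := Function.ne_iff.mp hz0
  obtain ⟨y, hfactor, hy⟩ := univ.extract_gcd z ⟨i, mem_univ i⟩
  have hg : univ.gcd z ≠ 0 := fun h0 ↦ hi (gcd_eq_zero_iff.mp h0 i (mem_univ i))
  have hzy : z = univ.gcd z • y := funext fun j ↦ hfactor j (mem_univ j)
  refine ⟨y, hy, ?_⟩
  rw [hzy, mulVec_smul] at hz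
  exact (smul_eq_zero.mp hz).resolve_left hg

theorem Matrix.exists_int_eigenvector_gcd_eq_one {K : Type*} [Field K] [CharZero K]
    (A : Matrix n n ℤ) (μ : ℤ) {x : n → K} (hx0 : x ≠ 0)
    (hx : A.map (Int.castRingHom K) *ᵥ x = (μ : K) • x) :
    ∃ z : n → ℤ, univ.gcd z = 1 ∧ A *ᵥ z = μ • z := by
  have hmap :
      (A - μ • 1).map (Int.castRingHom K) = A.map (Int.castRingHom K) - (μ : K) • 1 := by
    ext i j
    simp only [map_apply, Matrix.sub_apply, Matrix.smul_apply, Matrix.one_apply, smul_eq_mul]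
    split_ifs <;> simp
  have hdet : (A - μ • 1).det = 0 := by
    apply Int.cast_injective (α := K)
    rw [Int.cast_zero, ← eq_intCast (Int.castRingHom K), RingHom.map_det,
      RingHom.mapMatrix_apply, hmap, ← exists_mulVec_eq_zero_iff]
    exact ⟨x, hx0, by rw [sub_mulVec, smul_mulVec, one_mulVec, hx, sub_self]⟩
  obtain ⟨z, hz, hz0⟩ := exists_mulVec_eq_zero_gcd_eq_one hdet
  exact ⟨z, hz, by simpa [sub_mulVec, sub_eq_zero] using hz0⟩

end IntegerEigenvectors

namespace SimpleGraph

theorem IsBridge.exists_cut {V : Type*} {G : SimpleGraph V} {u v : V}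
    (h : G.IsBridge s(u, v)) :
    ∃ S : Set V, u ∈ S ∧ v ∉ S ∧ ∀ a b, G.Adj a b → a ∈ S → b ∉ S → a = u ∧ b = v := by
  refine ⟨{w | (G.deleteEdges {s(u, v)}).Reachable u w}, .rfl, h, fun a b hab ha hb ↦ ?_⟩
  have he : s(a, b) = s(u, v) := by
    by_contra hne
    exact hb (ha.trans (Adj.reachable (by simp [hab, hne])))
  rcases Sym2.eq_iff.mp he with ⟨rfl, rfl⟩ | ⟨rfl, rfl⟩
  · exact ⟨rfl, rfl⟩
  · exact absurd .rfl hb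

theorem dvd_sub_of_reachable {V R : Type*} [CommRing R] {G : SimpleGraph V} {x : V → R} {μ : R}
    (hadj : ∀ a b, G.Adj a b → μ ∣ x a - x b) {u v : V} (h : G.Reachable u v) :
    μ ∣ x u - x v := by
  obtain ⟨p⟩ := h
  induction p with
  | nil => simp
  | cons hab _ ih => simpa using dvd_add (hadj _ _ hab) ih

variable {V : Type*} [Fintype V] [DecidableEq V] (G : SimpleGraph V) [DecidableRel G.Adj]
variable {R : Type*} [CommRing R]

theorem map_lapMatrix {S : Type*} [CommRing S] (f : R →+* S) :
    (G.lapMatrix R).map f = G.lapMatrix S := by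
  ext i j
  simp only [map_apply, lapMatrix, degMatrix, Matrix.sub_apply, diagonal_apply, adjMatrix_apply]
  split_ifs <;> simp

theorem lapMatrix_mulVec_apply_eq_sum_sub (x : V → R) (w : V) :
    (G.lapMatrix R *ᵥ x) w = ∑ z ∈ G.neighborFinset w, (x w - x z) := by
  rw [lapMatrix_mulVec_apply, sum_sub_distrib, sum_const, card_neighborFinset_eq_degree,
    nsmul_eq_mul]

theorem dotProduct_lapMatrix_mulVec (x y : V → R) :
    y ⬝ᵥ (G.lapMatrix R *ᵥ x) = (G.lapMatrix R *ᵥ y) ⬝ᵥ x := by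
  rw [dotProduct_mulVec, ← vecMul_transpose, (G.isSymm_lapMatrix (R := R)).eq]

theorem sum_lapMatrix_mulVec_eq_zero (x : V → R) : ∑ w, (G.lapMatrix R *ᵥ x) w = 0 := by
  simpa [lapMatrix_mulVec_const_eq_zero, dotProduct] using
    G.dotProduct_lapMatrix_mulVec x (fun _ ↦ 1)

variable {G}

theorem lapMatrix_mulVec_indicator_eq_single_sub_single {S : Set V} {u v : V}
    (huv : G.Adj u v) (hu : u ∈ S) (hv : v ∉ S)
    (hcut : ∀ a b, G.Adj a b → a ∈ S → b ∉ S → a = u ∧ b = v) :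
    G.lapMatrix R *ᵥ S.indicator 1 = Pi.single u 1 - Pi.single v 1 := by
  ext w
  rw [lapMatrix_mulVec_apply_eq_sum_sub]
  have hne : u ≠ v := huv.ne
  by_cases hw : w ∈ S
  · have hterm : ∀ z ∈ G.neighborFinset w,
        S.indicator (1 : V → R) w - S.indicator 1 z = if z ∈ S then 0 else 1 := by
      intro z _
      split_ifs with hz <;> simp [hw, hz]
    rw [sum_congr rfl hterm]
    by_cases hwu : w = u
    · subst hwu
      rw [sum_eq_single_of_mem v (by simpa using huv)]
      · simp [hv, hne]
      · intro z hz hzv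
        simp only [mem_neighborFinset] at hz
        simp [show z ∈ S by by_contra h; exact hzv (hcut _ _ hz hw h).2]
    · rw [sum_eq_zero]
      · simp [hwu, show w ≠ v by rintro rfl; exact hv hw]
      · intro z hz
        simp only [mem_neighborFinset] at hz
        simp [show z ∈ S by by_contra h; exact hwu (hcut _ _ hz hw h).1]
  · have hterm : ∀ z ∈ G.neighborFinset w,
        S.indicator (1 : V → R) w - S.indicator 1 z = if z ∈ S then -1 else 0 := by
      intro z _
      split_ifs with hz <;> simp [hw, hz]
    rw [sum_congr rfl hterm]
    by_cases hwv : w = v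
    · subst hwv
      rw [sum_eq_single_of_mem u (by simpa using huv.symm)]
      · simp [hu, hne]
      · intro z hz hzu
        simp only [mem_neighborFinset] at hz
        simp [show z ∉ S from fun h ↦ hzu (hcut _ _ hz.symm h hw).1]
    · rw [sum_eq_zero]
      · simp [hwv, show w ≠ u by rintro rfl; exact hw hu]
      · intro z hz
        simp only [mem_neighborFinset] at hz
        simp [show z ∉ S from fun h ↦ hwv (hcut _ _ hz.symm h hw).2]

theorem IsBridge.exists_dotProduct_lapMatrix_mulVec_eq_sub {u v : V} (huv : G.Adj u v)
    (h : G.IsBridge s(u, v)) :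
    ∃ y : V → R, ∀ x, y ⬝ᵥ (G.lapMatrix R *ᵥ x) = x u - x v := by
  obtain ⟨S, hu, hv, hcut⟩ := h.exists_cut
  refine ⟨S.indicator 1, fun x ↦ ?_⟩
  rw [dotProduct_lapMatrix_mulVec,
    lapMatrix_mulVec_indicator_eq_single_sub_single huv hu hv hcut, sub_dotProduct,
    single_one_dotProduct, single_one_dotProduct]

theorem IsAcyclic.dvd_sub_of_lapMatrix_mulVec_eq_smul (hG : G.IsAcyclic) {μ : R} {x : V → R}
    (hx : G.lapMatrix R *ᵥ x = μ • x) {u v : V} (huv : G.Adj u v) : μ ∣ x u - x v := by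
  obtain ⟨y, hy⟩ :=
    (isAcyclic_iff_forall_adj_isBridge.mp hG huv).exists_dotProduct_lapMatrix_mulVec_eq_sub
      (R := R) huv
  rw [← hy, hx, dotProduct_smul, smul_eq_mul]
  exact dvd_mul_right μ _

theorem IsTree.dvd_sub_of_lapMatrix_mulVec_eq_smul (hG : G.IsTree) {μ : R} {x : V → R}
    (hx : G.lapMatrix R *ᵥ x = μ • x) (u v : V) : μ ∣ x u - x v :=
  dvd_sub_of_reachable (fun _ _ ↦ hG.isAcyclic.dvd_sub_of_lapMatrix_mulVec_eq_smul hx)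
    (hG.connected.preconnected u v)

end SimpleGraph

/-- If a tree `T` of order `n` has `2` as a Laplacian eigenvalue,
then `n` is even. -/
theorem tree_lap_eigenvalue_two_even_order {V : Type*} [Fintype V] [DecidableEq V]
    (T : SimpleGraph V) [DecidableRel T.Adj] (hT : T.IsTree)
    (h2 : ∃ X : V → ℝ, X ≠ 0 ∧ (T.lapMatrix ℝ).mulVec X = (2 : ℝ) • X) :
    Even (Fintype.card V) := by
  obtain ⟨X, hX0, hX⟩ := h2
  obtain ⟨Z, hgcd, hZ⟩ := (T.lapMatrix ℤ).exists_int_eigenvector_gcd_eq_one 2 hX0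
    (by rw [T.map_lapMatrix, hX]; norm_num)
  obtain ⟨v₀, hv₀⟩ : ∃ v₀, ¬ 2 ∣ Z v₀ := by
    by_contra! h
    exact absurd (hgcd ▸ dvd_gcd fun v _ ↦ h v) (by norm_num)
  have hsum : ∑ v, Z v = 0 := by
    have := T.sum_lapMatrix_mulVec_eq_zero Z
    rw [hZ] at this
    simpa [← mul_sum] using this
  have hparity : ∀ v, 2 ∣ Z v - Z v₀ := fun v ↦ hT.dvd_sub_of_lapMatrix_mulVec_eq_smul hZ v v₀
  have hcard : (2 : ℤ) ∣ Fintype.card V * Z v₀ := by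
    have : (Fintype.card V : ℤ) * Z v₀ = -∑ v, (Z v - Z v₀) := by
      simp [sum_sub_distrib, hsum]
    rw [this, dvd_neg]
    exact dvd_sum fun v _ ↦ hparity v
  have htwo : (2 : ℤ) ∣ Fintype.card V := (Int.prime_two.dvd_or_dvd hcard).resolve_right hv₀
  exact even_iff_two_dvd.mpr (by exact_mod_cast htwo)
end
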